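/- arXiv:math-ph/0203020 — 6 statements merged into one kernel-verified Lean document; each statement's English description precedes it below -/
import Mathlib

section
/- With the hypotheses of the Sakhnovich system (A₁ skew-Hermitian, D positive diagonal), for any λ with Im λ > 0, the function r ↦ P₂(r,λ)*P₂(r,λ) − P₁(r,λ)*P₁(r,λ) equals 2·Im(λ)·∫₀^r P₁(s,λ)* D P₁(s,λ) ds, and in particular it is positive semidefinite and nondecreasing in r (in the Loewner order). -/
/-!
Differentiating `P₂ᴴP₂ - P₁ᴴP₁` along the system, the terms in `A₂` cancel in pairs, the
skew-Hermitian `A₁` drops out, and only `-(iλ + conj (iλ)) P₁ᴴ D P₁ = 2 Im λ · P₁ᴴ D P₁`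
is left. The fundamental theorem of calculus turns this into the integral formula, and both
positivity statements follow because `P₁ᴴ D P₁` is positive semidefinite and integrals of
positive semidefinite matrices over `[t, r]` are positive semidefinite.
-/

open Complex MeasureTheory Matrix
open scoped ComplexOrder

attribute [local instance] Matrix.frobeniusSeminormedAddCommGroup
  Matrix.frobeniusNormedAddCommGroup Matrix.frobeniusNormedSpace
  Matrix.frobeniusNormedRing Matrix.frobeniusNormedAlgebra

-- Instance search does not reach this through the local Frobenius instances.
noncomputable instance {n : Type*} [Fintype n] : ENormedAddMonoid (Matrix n n ℂ) :=
  NormedAddCommGroup.toENormedAddCommMonoid.toENormedAddMonoid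

section
variable {n : Type*} [Fintype n] {f : ℝ → Matrix n n ℂ} {a b : ℝ}

theorem Matrix.IsHermitian.intervalIntegral (hf : IntervalIntegrable f volume a b)
    (hherm : ∀ s, (f s).IsHermitian) : (∫ s in a..b, f s).IsHermitian := by
  have h := (starL' ℝ).toContinuousLinearMap.intervalIntegral_comp_comm hf
  change ∫ s in a..b, (f s)ᴴ = (∫ s in a..b, f s)ᴴ at h
  rw [IsHermitian, ← h]
  exact intervalIntegral.integral_congr fun s _ => hherm s

theorem Matrix.star_dotProduct_mulVec_intervalIntegral (hf : IntervalIntegrable f volume a b)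
    (x : n → ℂ) :
    star x ⬝ᵥ ((∫ s in a..b, f s) *ᵥ x) = ∫ s in a..b, star x ⬝ᵥ (f s *ᵥ x) := by
  let q : Matrix n n ℂ →ₗ[ℂ] ℂ :=
    { toFun M := star x ⬝ᵥ (M *ᵥ x)
      map_add' M N := by rw [add_mulVec, dotProduct_add]
      map_smul' c M := by rw [smul_mulVec, dotProduct_smul]; rfl }
  exact (q.toContinuousLinearMap.intervalIntegral_comp_comm hf).symm

theorem Matrix.PosSemidef.intervalIntegral (hab : a ≤ b) (hf : IntervalIntegrable f volume a b)
    (hpos : ∀ s, (f s).PosSemidef) : (∫ s in a..b, f s).PosSemidef := by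
  refine .of_dotProduct_mulVec_nonneg (.intervalIntegral hf fun s => (hpos s).isHermitian)
    fun x => ?_
  rw [star_dotProduct_mulVec_intervalIntegral hf, intervalIntegral.integral_of_le hab]
  exact integral_nonneg fun s => (hpos s).dotProduct_mulVec_nonneg x

theorem sakhnovich_energy_deriv_eq {P₁ P₂ A₁ A₂ D : Matrix n n ℂ} (hD : Dᴴ = D)
    (hA₁ : A₁ᴴ = -A₁) (z : ℂ) :
    (A₂ * P₁)ᴴ * P₂ + P₂ᴴ * (A₂ * P₁) -
        ((z • (D * P₁) + A₁ * P₁ + A₂ᴴ * P₂)ᴴ * P₁ +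
          P₁ᴴ * (z • (D * P₁) + A₁ * P₁ + A₂ᴴ * P₂)) =
      -(star z + z) • (P₁ᴴ * D * P₁) := by
  simp only [conjTranspose_mul, conjTranspose_add, conjTranspose_smul, hD, hA₁,
    conjTranspose_conjTranspose, add_mul, mul_add, neg_mul, mul_neg, smul_mul_assoc,
    mul_smul_comm, Matrix.mul_assoc]
  module

variable [DecidableEq n]

theorem hasDerivAt_sakhnovich_energy {P₁ P₂ A₁ A₂ : ℝ → Matrix n n ℂ} {D : Matrix n n ℂ}
    (hD : Dᴴ = D) {z : ℂ} {r : ℝ} (hA₁ : (A₁ r)ᴴ = -A₁ r)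
    (hP₁ : HasDerivAt P₁ (z • (D * P₁ r) + A₁ r * P₁ r + (A₂ r)ᴴ * P₂ r) r)
    (hP₂ : HasDerivAt P₂ (A₂ r * P₁ r) r) :
    HasDerivAt (fun r => (P₂ r)ᴴ * P₂ r - (P₁ r)ᴴ * P₁ r)
      (-(star z + z) • ((P₁ r)ᴴ * D * P₁ r)) r := by
  rw [← sakhnovich_energy_deriv_eq hD hA₁]
  exact (hP₂.star.mul hP₂).sub (hP₁.star.mul hP₁)

end

theorem sakhnovich_monotone_posSemidef_general
    (m : ℕ)
    (A₁ A₂ : ℝ → Matrix (Fin m) (Fin m) ℂ)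
    (d : Fin m → ℝ) (hd : ∀ i, 0 < d i)
    (D : Matrix (Fin m) (Fin m) ℂ)
    (hD : D = Matrix.diagonal fun i => (d i : ℂ))
    (hA₁skew : ∀ r, (A₁ r)ᴴ = -(A₁ r))
    (l : ℂ) (hl : 0 < l.im)
    (P₁ P₂ : ℝ → Matrix (Fin m) (Fin m) ℂ)
    (hP₁ : ∀ r, HasDerivAt P₁
      ((Complex.I * l) • (D * P₁ r) + A₁ r * P₁ r + (A₂ r)ᴴ * P₂ r) r)
    (hP₂ : ∀ r, HasDerivAt P₂ (A₂ r * P₁ r) r)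
    (hP₁0 : P₁ 0 = 1) (hP₂0 : P₂ 0 = 1) :
    (∀ r : ℝ, 0 ≤ r →
      (P₂ r)ᴴ * P₂ r - (P₁ r)ᴴ * P₁ r =
        ((2 * l.im : ℝ) : ℂ) • ∫ s in (0:ℝ)..r, (P₁ s)ᴴ * D * P₁ s) ∧
    (∀ r : ℝ, 0 ≤ r → ((P₂ r)ᴴ * P₂ r - (P₁ r)ᴴ * P₁ r).PosSemidef) ∧
    (∀ t r : ℝ, 0 ≤ t → t ≤ r →
      (((P₂ r)ᴴ * P₂ r - (P₁ r)ᴴ * P₁ r) -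
        ((P₂ t)ᴴ * P₂ t - (P₁ t)ᴴ * P₁ t)).PosSemidef) := by
  set F := fun r => (P₂ r)ᴴ * P₂ r - (P₁ r)ᴴ * P₁ r
  have hDpos : D.PosSemidef :=
    hD ▸ posSemidef_diagonal_iff.2 fun i => by exact_mod_cast (hd i).le
  have hg : Continuous fun s => (P₁ s)ᴴ * D * P₁ s := by
    have hP₁c : Continuous P₁ := continuous_iff_continuousAt.2 fun r => (hP₁ r).continuousAt
    exact (hP₁c.matrix_conjTranspose.mul continuous_const).mul hP₁c
  have hz : -(star (I * l) + I * l) = ((2 * l.im : ℝ) : ℂ) := by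
    apply Complex.ext <;> simp
    ring
  have hF : ∀ t r, F r - F t = ((2 * l.im : ℝ) : ℂ) • ∫ s in t..r, (P₁ s)ᴴ * D * P₁ s := by
    intro t r
    rw [← intervalIntegral.integral_smul, ← hz]
    exact (intervalIntegral.integral_eq_sub_of_hasDerivAt
      (fun s _ => hasDerivAt_sakhnovich_energy hDpos.isHermitian (hA₁skew s) (hP₁ s) (hP₂ s))
      ((hg.const_smul (-(star (I * l) + I * l))).intervalIntegrable _ _)).symm
  have hmono : ∀ t r, t ≤ r → (F r - F t).PosSemidef := by
    intro t r htr
    rw [hF]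
    exact (PosSemidef.intervalIntegral htr (hg.intervalIntegrable _ _)
      fun s => hDpos.conjTranspose_mul_mul_same (P₁ s)).smul
      (zero_le_real.2 (mul_nonneg zero_le_two hl.le))
  have hF0 : F 0 = 0 := by simp [F, hP₁0, hP₂0]
  refine ⟨fun r _ => ?_, fun r hr => ?_, fun t r _ htr => hmono t r htr⟩
  · simpa [hF0] using hF 0 r
  · simpa [hF0] using hmono 0 r hr

/-- For the Sakhnovich system with `Im λ > 0`, the matrix
`P₂ᴴP₂ - P₁ᴴP₁` equals `2 Im λ ∫₀^r P₁ᴴ D P₁`, is positive semidefinite and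
is nondecreasing in `r` in the Loewner order. -/
theorem sakhnovich_monotone_posSemidef
    (m : ℕ)
    (A₁ A₂ : ℝ → Matrix (Fin m) (Fin m) ℂ)
    (d : Fin m → ℝ) (hd : ∀ i, 0 < d i)
    (D : Matrix (Fin m) (Fin m) ℂ)
    (hD : D = Matrix.diagonal fun i => (d i : ℂ))
    (hA₁c : Continuous A₁) (hA₂c : Continuous A₂)
    (hA₁skew : ∀ r, (A₁ r)ᴴ = -(A₁ r))
    (l : ℂ) (hl : 0 < l.im)
    (P₁ P₂ : ℝ → Matrix (Fin m) (Fin m) ℂ)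
    (hP₁ : ∀ r, HasDerivAt P₁
      ((Complex.I * l) • (D * P₁ r) + A₁ r * P₁ r + (A₂ r)ᴴ * P₂ r) r)
    (hP₂ : ∀ r, HasDerivAt P₂ (A₂ r * P₁ r) r)
    (hP₁0 : P₁ 0 = 1) (hP₂0 : P₂ 0 = 1) :
    (∀ r : ℝ, 0 ≤ r →
      (P₂ r)ᴴ * P₂ r - (P₁ r)ᴴ * P₁ r =
        ((2 * l.im : ℝ) : ℂ) • ∫ s in (0:ℝ)..r, (P₁ s)ᴴ * D * P₁ s) ∧
    (∀ r : ℝ, 0 ≤ r → ((P₂ r)ᴴ * P₂ r - (P₁ r)ᴴ * P₁ r).PosSemidef) ∧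
    (∀ t r : ℝ, 0 ≤ t → t ≤ r →
      (((P₂ r)ᴴ * P₂ r - (P₁ r)ᴴ * P₁ r) -
        ((P₂ t)ᴴ * P₂ t - (P₁ t)ᴴ * P₁ t)).PosSemidef) :=
  sakhnovich_monotone_posSemidef_general m A₁ A₂ d hd D hD hA₁skew l hl P₁ P₂ hP₁ hP₂ hP₁0 hP₂0
end

section
/- For a Krein system with continuous coefficient a, for every λ with Im λ ≥ 0 and every r ≥ 0 one has |p*(r,λ)|² − |p(r,λ)|² ≥ 0, i.e. |p*(r,λ)| ≥ |p(r,λ)|, and for Im λ > 0, r > 0 one has p(r,λ) ≠ −p*(r,λ). -/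
open Complex MeasureTheory

private lemma krein_re_identity (x y A ll : ℂ) :
    ((starRingEnd ℂ) (-A * x) * y + (starRingEnd ℂ) y * (-A * x)
      - ((starRingEnd ℂ) (Complex.I * ll * x - (starRingEnd ℂ) A * y) * x
        + (starRingEnd ℂ) x * (Complex.I * ll * x - (starRingEnd ℂ) A * y))).re
      = 2 * ll.im * ‖x‖ ^ 2 := by
  simp only [Complex.sq_norm, Complex.normSq_apply,
    map_mul, map_sub, map_neg, Complex.conj_conj, Complex.conj_I,
    Complex.mul_re, Complex.mul_im, Complex.sub_re, Complex.sub_im,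
    Complex.add_re, Complex.neg_re, Complex.neg_im, Complex.I_re, Complex.I_im,
    Complex.conj_re, Complex.conj_im]
  ring

private lemma conj_mul_self_re (z : ℂ) : ((starRingEnd ℂ) z * z).re = ‖z‖ ^ 2 := by
  simp only [Complex.sq_norm, Complex.normSq_apply,
    Complex.mul_re, Complex.conj_re, Complex.conj_im]
  ring

/-- For the Krein system with `Im λ ≥ 0`: `|p*|² ≥ |p|²`, and for `Im λ > 0`
and `r > 0` one has `p(r,λ) ≠ -p*(r,λ)`. -/
theorem krein_pstar_dominates
    (a p q : ℝ → ℂ) (l : ℂ)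
    (ha : Continuous a)
    (hl : 0 ≤ l.im)
    (hp : ∀ r, HasDerivAt p (Complex.I * l * p r - (starRingEnd ℂ) (a r) * q r) r)
    (hq : ∀ r, HasDerivAt q (-(a r) * p r) r)
    (hp0 : p 0 = 1) (hq0 : q 0 = 1) :
    (∀ r : ℝ, 0 ≤ r → ‖p r‖ ^ 2 ≤ ‖q r‖ ^ 2) ∧
      (0 < l.im → ∀ r : ℝ, 0 < r → p r ≠ -q r) := by
  set g : ℝ → ℝ := fun r =>
    ((starRingEnd ℂ) (q r) * q r - (starRingEnd ℂ) (p r) * p r).re with hg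
  have hgval : ∀ r, g r = ‖q r‖ ^ 2 - ‖p r‖ ^ 2 := by
    intro r
    simp only [hg, Complex.sub_re, conj_mul_self_re]
  have hg0 : g 0 = 0 := by simp [hgval, hp0, hq0]
  have hgderiv : ∀ r, HasDerivAt g (2 * l.im * ‖p r‖ ^ 2) r := by
    intro r
    have h1 : HasDerivAt (fun r => (starRingEnd ℂ) (q r) * q r - (starRingEnd ℂ) (p r) * p r)
        ((starRingEnd ℂ) (-(a r) * p r) * q r + (starRingEnd ℂ) (q r) * (-(a r) * p r)
          - ((starRingEnd ℂ) (Complex.I * l * p r - (starRingEnd ℂ) (a r) * q r) * p r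
            + (starRingEnd ℂ) (p r) * (Complex.I * l * p r - (starRingEnd ℂ) (a r) * q r))) r :=
      (((hq r).star.mul (hq r)).sub ((hp r).star.mul (hp r)))
    have h2 := (Complex.reCLM.hasFDerivAt.comp_hasDerivAt r h1)
    have : (Complex.reCLM
        ((starRingEnd ℂ) (-(a r) * p r) * q r + (starRingEnd ℂ) (q r) * (-(a r) * p r)
          - ((starRingEnd ℂ) (Complex.I * l * p r - (starRingEnd ℂ) (a r) * q r) * p r
            + (starRingEnd ℂ) (p r) * (Complex.I * l * p r - (starRingEnd ℂ) (a r) * q r))))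
        = 2 * l.im * ‖p r‖ ^ 2 := krein_re_identity (p r) (q r) (a r) l
    rw [this] at h2
    exact h2
  have hgdiff : Differentiable ℝ g := fun r => (hgderiv r).differentiableAt
  have hgd : ∀ r, deriv g r = 2 * l.im * ‖p r‖ ^ 2 := fun r => (hgderiv r).deriv
  have hmono : Monotone g := by
    apply monotone_of_deriv_nonneg hgdiff
    intro r
    rw [hgd r]
    positivity
  have hnonneg : ∀ r : ℝ, 0 ≤ r → ‖p r‖ ^ 2 ≤ ‖q r‖ ^ 2 := by
    intro r hr
    have := hmono hr
    rw [hg0, hgval] at this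
    linarith
  refine ⟨hnonneg, ?_⟩
  intro hlpos r hr
  -- find δ > 0 with p nonzero on [0, δ]
  have hpc0 : ContinuousAt p 0 := (hp 0).continuousAt
  obtain ⟨δ₀, hδ₀, hδ⟩ := Metric.continuousAt_iff.mp hpc0 1 one_pos
  set δ : ℝ := min (δ₀ / 2) r with hδdef
  have hδpos : 0 < δ := lt_min (by linarith) hr
  have hδr : δ ≤ r := min_le_right _ _
  have hpne : ∀ s ∈ Set.Icc (0 : ℝ) δ, p s ≠ 0 := by
    intro s hs hps
    have hds : dist s 0 < δ₀ := by
      rw [Real.dist_eq, sub_zero, _root_.abs_of_nonneg hs.1]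
      have := hs.2
      have : s ≤ δ₀ / 2 := le_trans this (min_le_left _ _)
      linarith
    have := hδ hds
    rw [hps, hp0] at this
    simp [dist_eq_norm] at this
  -- g strictly increases on [0, δ]
  have hstrict : StrictMonoOn g (Set.Icc 0 δ) := by
    apply strictMonoOn_of_deriv_pos (convex_Icc 0 δ) (hgdiff.continuous.continuousOn)
    intro s hs
    rw [interior_Icc] at hs
    rw [hgd s]
    have hps : p s ≠ 0 := hpne s ⟨le_of_lt hs.1, le_of_lt hs.2⟩
    have h0 : 0 < ‖p s‖ ^ 2 := pow_pos (norm_pos_iff.mpr hps) 2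
    have := mul_pos (mul_pos two_pos hlpos) h0
    linarith
  have hgδ : 0 < g δ := by
    have := hstrict (Set.left_mem_Icc.mpr hδpos.le) (Set.right_mem_Icc.mpr hδpos.le) hδpos
    rwa [hg0] at this
  have hgr : 0 < g r := lt_of_lt_of_le hgδ (hmono hδr)
  intro hcontra
  rw [hgval] at hgr
  rw [hcontra] at hgr
  simp at hgr
end

section
/- Generalized Gronwall lemma: if α : [0,T] → ℝ is nonnegative and integrable, c ≥ 0, β : [0,T] → ℝ is nonnegative and integrable, and α(r) ≤ c∫₀^r α(s) ds + β(r) for all r ∈ [0,T], then α(r) ≤ c∫₀^r e^{c(r−s)} β(s) ds + β(r) for all r ∈ [0,T]. -/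
/-!
With `A t = ∫ s in a..t, α s`, the function `t ↦ exp (c * (b - t)) * A t` is absolutely
continuous with derivative `exp (c * (b - t)) * (α t - c * A t) ≤ exp (c * (b - t)) * β t`
almost everywhere on `[a, b]`. Integrating over `[a, b]` gives
`A b ≤ ∫ s in a..b, exp (c * (b - s)) * β s`, and the hypothesis at `r = b` finishes.
-/

open MeasureTheory

open Set intervalIntegral in
theorem integral_le_integral_exp_mul_of_le_mul_integral_add {α β : ℝ → ℝ} {a b c : ℝ}
    (hab : a ≤ b) (hα : IntervalIntegrable α volume a b) (hβ : IntervalIntegrable β volume a b)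
    (h : ∀ t ∈ Icc a b, α t ≤ c * (∫ s in a..t, α s) + β t) :
    ∫ s in a..b, α s ≤ ∫ s in a..b, Real.exp (c * (b - s)) * β s := by
  set A : ℝ → ℝ := fun t => ∫ s in a..t, α s
  set E : ℝ → ℝ := fun t => Real.exp (c * (b - t))
  have hE : ∀ t, HasDerivAt E (-c * E t) t := fun t => by
    simpa [E, mul_comm] using ((hasDerivAt_id t).const_sub b |>.const_mul c).exp
  have hEA_ac : AbsolutelyContinuousOnInterval (E * A) a b :=
    ((contDiff_const.mul (contDiff_const.sub contDiff_id)).exp.contDiffOn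
      |>.absolutelyContinuousOnInterval).mul
      (hα.absolutelyContinuousOnInterval_intervalIntegral left_mem_uIcc)
  have hderiv : ∀ᵐ t, t ∈ Icc a b → deriv (E * A) t = E t * (α t - c * A t) := by
    filter_upwards [hα.ae_hasDerivAt_integral] with t hA ht
    rw [← uIcc_of_le hab] at ht
    rw [((hE t).mul (hA ht a left_mem_uIcc)).deriv]
    ring
  calc ∫ s in a..b, α s = (E * A) b - (E * A) a := by simp [E, A]
    _ = ∫ t in a..b, deriv (E * A) t := hEA_ac.integral_deriv_eq_sub.symm
    _ ≤ ∫ t in a..b, E t * β t := by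
      refine integral_mono_ae_restrict hab hEA_ac.intervalIntegrable_deriv
        (hβ.continuousOn_mul (by fun_prop)) ((ae_restrict_iff' measurableSet_Icc).2 ?_)
      filter_upwards [hderiv] with t hEA ht
      rw [hEA ht]
      gcongr
      linarith [h t ht]

theorem gronwall_lemma_general_general
    (T c : ℝ) (α β : ℝ → ℝ)
    (hc : 0 ≤ c)
    (hα_int : IntegrableOn α (Set.Icc 0 T))
    (hβ_int : IntegrableOn β (Set.Icc 0 T))
    (hα : ∀ r ∈ Set.Icc (0:ℝ) T, α r ≤ c * (∫ s in (0:ℝ)..r, α s) + β r) :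
    ∀ r ∈ Set.Icc (0:ℝ) T,
      α r ≤ c * (∫ s in (0:ℝ)..r, Real.exp (c * (r - s)) * β s) + β r := by
  intro r hr
  have hsub : Set.uIcc 0 r ⊆ Set.Icc 0 T := Set.uIcc_subset_Icc ⟨le_rfl, hr.1.trans hr.2⟩ hr
  have key := integral_le_integral_exp_mul_of_le_mul_integral_add hr.1
    (hα_int.mono_set hsub).intervalIntegrable (hβ_int.mono_set hsub).intervalIntegrable
    fun t ht => hα t ⟨ht.1, ht.2.trans hr.2⟩
  calc α r ≤ c * (∫ s in (0:ℝ)..r, α s) + β r := hα r hr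
    _ ≤ c * (∫ s in (0:ℝ)..r, Real.exp (c * (r - s)) * β s) + β r := by gcongr

/-- Generalized Gronwall lemma. -/
theorem gronwall_lemma_general
    (T c : ℝ) (α β : ℝ → ℝ)
    (hT : 0 ≤ T)
    (hc : 0 ≤ c)
    (hα_int : IntegrableOn α (Set.Icc 0 T))
    (hβ_int : IntegrableOn β (Set.Icc 0 T))
    (hα_nonneg : ∀ r ∈ Set.Icc (0:ℝ) T, 0 ≤ α r)
    (hβ_nonneg : ∀ r ∈ Set.Icc (0:ℝ) T, 0 ≤ β r)
    (hα : ∀ r ∈ Set.Icc (0:ℝ) T, α r ≤ c * (∫ s in (0:ℝ)..r, α s) + β r) :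
    ∀ r ∈ Set.Icc (0:ℝ) T,
      α r ≤ c * (∫ s in (0:ℝ)..r, Real.exp (c * (r - s)) * β s) + β r :=
  gronwall_lemma_general_general T c α β hc hα_int hβ_int hα
end

section
/- Let a(r) be the piecewise constant function equal to −b on [0,ε], conj(ξ)·b on [ε,2ε], 0 on [2ε,∞), with b > 0 and |ξ| = 1. Let q, q* solve q' = −conj(a)q*, (q*)' = −a q with q(0)=0, q*(0)=1. Then q(ε) = sinh(bε), q*(ε) = cosh(bε), q(2ε) = (1/2)(1−ξ)sinh(2bε), and q*(2ε) = 1 + (1−conj(ξ))·sinh²(bε). -/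
/-!
On an interval where the coefficient is the constant `conj ζ * b` with `|ζ| = 1`, the combinations
`q ± ζ q*` decouple and evolve by `exp (∓ b r)`, so the solution is transported across the interval
by the matrix `[[cosh, -ζ sinh], [-conj ζ sinh, cosh]]` evaluated at `b` times its length.
Composing the step with `ζ = -1` on `[0, ε]` and the step with `ζ = ξ` on `[ε, 2ε]` gives the values.
-/

open Complex

theorem eq_of_hasDerivAt_zero_of_le {E : Type*} [NormedAddCommGroup E] [NormedSpace ℝ E]
    [CompleteSpace E] {f : ℝ → E} {s t : ℝ} (hst : s ≤ t)
    (hf : ContinuousOn f (Set.Icc s t)) (hf' : ∀ x ∈ Set.Ioo s t, HasDerivAt f 0 x) :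
    f t = f s := by
  have h := intervalIntegral.integral_eq_sub_of_hasDerivAt_of_le hst hf hf'
    intervalIntegrable_const
  rw [intervalIntegral.integral_zero] at h
  exact sub_eq_zero.1 h.symm

theorem eq_exp_mul_of_hasDerivAt_eq_mul {f : ℝ → ℂ} {c : ℂ} {s t : ℝ} (hst : s ≤ t)
    (hf : ContinuousOn f (Set.Icc s t))
    (hf' : ∀ x ∈ Set.Ioo s t, HasDerivAt f (c * f x) x) :
    f t = exp (c * (t - s)) * f s := by
  have hexp : ∀ x : ℝ, HasDerivAt (fun y : ℝ => exp (-c * y)) (exp (-c * x) * -c) x :=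
    fun x => by simpa using (((hasDerivAt_id (x : ℂ)).const_mul (-c)).cexp).comp_ofReal
  have hconst := eq_of_hasDerivAt_zero_of_le hst
    (f := fun x => exp (-c * x) * f x)
    ((Continuous.continuousOn (by fun_prop)).mul hf)
    fun x hx => ((hexp x).mul (hf' x hx)).congr_deriv (by ring)
  calc f t = exp (c * t) * (exp (-c * t) * f t) := by
        rw [← mul_assoc, ← exp_add]; ring_nf; simp
    _ = exp (c * (t - s)) * f s := by
        rw [hconst, ← mul_assoc, ← exp_add]; ring_nf

theorem coupled_eq_cosh_sinh_of_hasDerivAt {q qs : ℝ → ℂ} {b ζ : ℂ} {s t : ℝ}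
    (hζ : ζ ≠ 0) (hst : s ≤ t)
    (hq : ContinuousOn q (Set.Icc s t)) (hqs : ContinuousOn qs (Set.Icc s t))
    (hq' : ∀ x ∈ Set.Ioo s t, HasDerivAt q (-(ζ * b) * qs x) x)
    (hqs' : ∀ x ∈ Set.Ioo s t, HasDerivAt qs (-(ζ⁻¹ * b) * q x) x) :
    q t = cosh (b * (t - s)) * q s - ζ * sinh (b * (t - s)) * qs s ∧
    qs t = cosh (b * (t - s)) * qs s - ζ⁻¹ * sinh (b * (t - s)) * q s := by
  -- `q ± ζ qs` diagonalize the system, with eigenvalues `∓ b`.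
  have hplus := eq_exp_mul_of_hasDerivAt_eq_mul (f := fun x => q x + ζ * qs x) (c := -b) hst
    (hq.add (hqs.const_smul ζ))
    fun x hx => ((hq' x hx).add ((hqs' x hx).const_mul ζ)).congr_deriv (by field_simp; ring)
  have hminus := eq_exp_mul_of_hasDerivAt_eq_mul (f := fun x => q x - ζ * qs x) (c := b) hst
    (hq.sub (hqs.const_smul ζ))
    fun x hx => ((hq' x hx).sub ((hqs' x hx).const_mul ζ)).congr_deriv (by field_simp; ring)
  rw [neg_mul, ← cosh_sub_sinh] at hplus
  rw [← cosh_add_sinh] at hminus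
  constructor
  · linear_combination (hplus + hminus) / 2
  · field_simp
    linear_combination (hplus - hminus) / 2

theorem q_system_piecewise_constant_general
    (b ε : ℝ) (hε : 0 < ε)
    (ξ : ℂ) (hξ : ‖ξ‖ = 1)
    (A : ℝ → ℂ)
    (hA : ∀ r : ℝ, A r = if r ≤ ε then (-b : ℂ)
      else if r ≤ 2 * ε then (starRingEnd ℂ) ξ * (b : ℂ) else 0)
    (q qs : ℝ → ℂ)
    (hqc : Continuous q) (hqsc : Continuous qs)
    (hq : ∀ r : ℝ, 0 < r → r ≠ ε → r ≠ 2 * ε →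
      HasDerivAt q (-(starRingEnd ℂ) (A r) * qs r) r)
    (hqs : ∀ r : ℝ, 0 < r → r ≠ ε → r ≠ 2 * ε →
      HasDerivAt qs (-(A r) * q r) r)
    (hq0 : q 0 = 0) (hqs0 : qs 0 = 1) :
    q ε = (Real.sinh (b * ε) : ℝ) ∧
    qs ε = (Real.cosh (b * ε) : ℝ) ∧
    q (2 * ε) = (1 / 2 : ℂ) * (1 - ξ) * (Real.sinh (2 * b * ε) : ℝ) ∧
    qs (2 * ε) = 1 + (1 - (starRingEnd ℂ) ξ) * ((Real.sinh (b * ε) : ℝ) : ℂ) ^ 2 := by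
  -- `-b = conj (-1) * b`, so the first step is the case `ζ = -1`.
  have hA₁ : ∀ r ∈ Set.Ioo 0 ε, A r = -b := fun r hr => by rw [hA, if_pos hr.2.le]
  have hA₂ : ∀ r ∈ Set.Ioo ε (2 * ε), A r = starRingEnd ℂ ξ * b := fun r hr => by
    rw [hA, if_neg (not_le.2 hr.1), if_pos hr.2.le]
  have hξinv : ξ⁻¹ = starRingEnd ℂ ξ := RCLike.inv_eq_conj hξ
  obtain ⟨hqε, hqsε⟩ := coupled_eq_cosh_sinh_of_hasDerivAt (ζ := -1) (b := b) (s := 0) (t := ε)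
    (by norm_num) hε.le hqc.continuousOn hqsc.continuousOn
    (fun r hr => by simpa [hA₁ r hr] using hq r hr.1 hr.2.ne (by linarith [hr.2]))
    (fun r hr => by simpa [hA₁ r hr] using hqs r hr.1 hr.2.ne (by linarith [hr.2]))
  obtain ⟨hq2ε, hqs2ε⟩ := coupled_eq_cosh_sinh_of_hasDerivAt (ζ := ξ) (b := b)
    (s := ε) (t := 2 * ε) (norm_ne_zero_iff.1 (by simp [hξ])) (by linarith)
    hqc.continuousOn hqsc.continuousOn
    (fun r hr => by simpa [hA₂ r hr] using hq r (by linarith [hr.1]) hr.1.ne' hr.2.ne)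
    (fun r hr => by simpa [hA₂ r hr, hξinv] using hqs r (by linarith [hr.1]) hr.1.ne' hr.2.ne)
  simp only [hq0, hqs0, ofReal_zero, sub_zero, mul_zero, mul_one, zero_sub, neg_mul, one_mul,
    neg_neg] at hqε hqsε
  have hlen : ((2 * ε : ℝ) : ℂ) - ε = ε := by push_cast; ring
  rw [hlen, hqε, hqsε] at hq2ε hqs2ε
  rw [hξinv] at hqs2ε
  push_cast
  refine ⟨hqε, hqsε, ?_, ?_⟩
  · rw [hq2ε, mul_assoc 2, sinh_two_mul]
    ring
  · rw [hqs2ε, ← sq, cosh_sq]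
    ring

/-- Explicit values at `ε` and `2ε` of the solution of `q' = -conj(a) q*`,
`(q*)' = -a q` for the piecewise-constant coefficient `a` equal to `-b` on
`[0,ε]`, `conj(ξ) b` on `[ε,2ε]` and `0` afterwards. -/
theorem q_system_piecewise_constant
    (b ε : ℝ) (hb : 0 < b) (hε : 0 < ε)
    (ξ : ℂ) (hξ : ‖ξ‖ = 1)
    (A : ℝ → ℂ)
    (hA : ∀ r : ℝ, A r = if r ≤ ε then (-b : ℂ)
      else if r ≤ 2 * ε then (starRingEnd ℂ) ξ * (b : ℂ) else 0)
    (q qs : ℝ → ℂ)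
    (hqc : Continuous q) (hqsc : Continuous qs)
    (hq : ∀ r : ℝ, 0 < r → r ≠ ε → r ≠ 2 * ε →
      HasDerivAt q (-(starRingEnd ℂ) (A r) * qs r) r)
    (hqs : ∀ r : ℝ, 0 < r → r ≠ ε → r ≠ 2 * ε →
      HasDerivAt qs (-(A r) * q r) r)
    (hq0 : q 0 = 0) (hqs0 : qs 0 = 1) :
    q ε = (Real.sinh (b * ε) : ℝ) ∧
    qs ε = (Real.cosh (b * ε) : ℝ) ∧
    q (2 * ε) = (1 / 2 : ℂ) * (1 - ξ) * (Real.sinh (2 * b * ε) : ℝ) ∧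
    qs (2 * ε) = 1 + (1 - (starRingEnd ℂ) ξ) * ((Real.sinh (b * ε) : ℝ) : ℂ) ^ 2 :=
  q_system_piecewise_constant_general b ε hε ξ hξ A hA q qs hqc hqsc hq hqs hq0 hqs0
end

section
/- For the Krein system with continuous coefficient a and Im λ > 0, if liminf_{r→∞} |p*(r,λ)| < ∞ for some λ ∈ ℂ⁺, then ∫₀^∞ |p(s,λ)|² ds < ∞ for that λ; conversely, if ∫₀^∞ |p(s,λ)|² ds < ∞ then liminf_{r→∞} |p*(r,λ)| < ∞. -/
/-!
Differentiating along the system gives `(|p*|² - |p|²)' = 2 Im λ |p|²`, so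
`|p*(r)|² - |p(r)|² = 2 Im λ ∫₀^r |p|²`. If `|p*| ≤ M` at arbitrarily large `r`, the increasing
partial integrals are therefore bounded by `M² / (2 Im λ)`. Conversely, if they are bounded by `C`,
then `|p| ≤ 1` at arbitrarily large `r` (otherwise the integral would grow linearly), and at those
points `|p*|² ≤ 1 + 2 Im λ C`.
-/

open Complex MeasureTheory Filter

theorem krein_hasDerivAt_norm_sq_sub {a p q : ℝ → ℂ} {l : ℂ} {r : ℝ}
    (hp : HasDerivAt p (I * l * p r - (starRingEnd ℂ) (a r) * q r) r)
    (hq : HasDerivAt q (-(a r) * p r) r) :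
    HasDerivAt (fun s => ‖q s‖ ^ 2 - ‖p s‖ ^ 2) (2 * l.im * ‖p r‖ ^ 2) r := by
  refine (hq.norm_sq.sub hp.norm_sq).congr_deriv ?_
  simp only [Complex.inner, Complex.sq_norm, Complex.normSq_apply, mul_re, mul_im, sub_re, sub_im,
    neg_re, neg_im, I_re, I_im, conj_re, conj_im]
  ring

theorem krein_norm_sq_sub_norm_sq {a p q : ℝ → ℂ} {l : ℂ}
    (hp : ∀ r, HasDerivAt p (I * l * p r - (starRingEnd ℂ) (a r) * q r) r)
    (hq : ∀ r, HasDerivAt q (-(a r) * p r) r) (hp0 : p 0 = 1) (hq0 : q 0 = 1) (r : ℝ) :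
    ‖q r‖ ^ 2 - ‖p r‖ ^ 2 = 2 * l.im * ∫ s in (0:ℝ)..r, ‖p s‖ ^ 2 := by
  have hpc : Continuous p := continuous_iff_continuousAt.2 fun s => (hp s).continuousAt
  rw [← intervalIntegral.integral_const_mul, intervalIntegral.integral_eq_sub_of_hasDerivAt
    (fun s _ => krein_hasDerivAt_norm_sq_sub (hp s) (hq s))
    ((continuous_const.mul (hpc.norm.pow 2)).intervalIntegrable _ _)]
  simp [hp0, hq0]

theorem frequently_le_of_integral_le {f : ℝ → ℝ} (hf : Continuous f) {a C ε : ℝ} (hε : 0 < ε)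
    (hC : ∀ r, a ≤ r → ∫ s in a..r, f s ≤ C) : ∃ᶠ r in atTop, f r ≤ ε := by
  by_contra hcon
  obtain ⟨R, hR⟩ := eventually_atTop.1 (not_frequently.1 hcon)
  set R' := max R a
  set r := R' + |C - ∫ s in a..R', f s| / ε + 1
  have hR'r : R' ≤ r := by
    have := div_nonneg (abs_nonneg (C - ∫ s in a..R', f s)) hε.le; linarith
  have hlower : ε * (r - R') ≤ ∫ s in R'..r, f s :=
    calc ε * (r - R') = ∫ _ in R'..r, ε := by simp [mul_comm]
      _ ≤ ∫ s in R'..r, f s := intervalIntegral.integral_mono_on hR'r intervalIntegrable_const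
          (hf.intervalIntegrable _ _) fun s hs => (not_le.1 (hR s ((le_max_left _ _).trans hs.1))).le
  have hsplit := intervalIntegral.integral_add_adjacent_intervals
    (hf.intervalIntegrable (μ := volume) a R') (hf.intervalIntegrable R' r)
  have hεr : ε * (r - R') = |C - ∫ s in a..R', f s| + ε := by
    simp only [r]; field_simp; ring
  have := hC r ((le_max_right _ _).trans hR'r)
  linarith [le_abs_self (C - ∫ s in a..R', f s)]

section EnergyIdentity

variable {E F : Type*} [NormedAddCommGroup E] [NormedAddCommGroup F] {p : ℝ → E} {q : ℝ → F}
  {c : ℝ}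

theorem integral_norm_sq_le_of_frequently_norm_le (hc : 0 < c) (hpc : Continuous p)
    (henergy : ∀ r, ‖q r‖ ^ 2 - ‖p r‖ ^ 2 = c * ∫ s in (0:ℝ)..r, ‖p s‖ ^ 2) {M : ℝ}
    (hM : ∃ᶠ r in atTop, ‖q r‖ ≤ M) {r : ℝ} (hr : 0 ≤ r) :
    ∫ s in (0:ℝ)..r, ‖p s‖ ^ 2 ≤ M ^ 2 / c := by
  obtain ⟨r', hqM, hrr'⟩ := (hM.and_eventually (eventually_ge_atTop r)).exists
  have hmono : ∫ s in (0:ℝ)..r, ‖p s‖ ^ 2 ≤ ∫ s in (0:ℝ)..r', ‖p s‖ ^ 2 :=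
    intervalIntegral.integral_mono_interval le_rfl hr hrr' (.of_forall fun _ => by positivity)
      ((hpc.norm.pow 2).intervalIntegrable _ _)
  have hq2 : ‖q r'‖ ^ 2 ≤ M ^ 2 := pow_le_pow_left₀ (norm_nonneg _) hqM 2
  rw [le_div_iff₀ hc]
  nlinarith [henergy r', sq_nonneg ‖p r'‖]

theorem frequently_norm_le_of_integral_norm_sq_le (hc : 0 ≤ c) (hpc : Continuous p)
    (henergy : ∀ r, ‖q r‖ ^ 2 - ‖p r‖ ^ 2 = c * ∫ s in (0:ℝ)..r, ‖p s‖ ^ 2) {C : ℝ}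
    (hC : ∀ r, 0 ≤ r → ∫ s in (0:ℝ)..r, ‖p s‖ ^ 2 ≤ C) :
    ∃ᶠ r in atTop, ‖q r‖ ≤ √(1 + c * C) := by
  have hp1 : ∃ᶠ r in atTop, ‖p r‖ ^ 2 ≤ 1 :=
    frequently_le_of_integral_le (hpc.norm.pow 2) one_pos hC
  refine (hp1.and_eventually (eventually_ge_atTop 0)).mono fun r ⟨hpr, hr⟩ => ?_
  exact Real.le_sqrt_of_sq_le (by nlinarith [henergy r, hC r hr])

end EnergyIdentity

theorem krein_liminf_iff_square_integrable_general
    (a p q : ℝ → ℂ) (l : ℂ)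
    (hl : 0 < l.im)
    (hp : ∀ r, HasDerivAt p (Complex.I * l * p r - (starRingEnd ℂ) (a r) * q r) r)
    (hq : ∀ r, HasDerivAt q (-(a r) * p r) r)
    (hp0 : p 0 = 1) (hq0 : q 0 = 1) :
    (∃ M : ℝ, ∃ᶠ r in atTop, ‖q r‖ ≤ M) ↔
      (∃ C : ℝ, ∀ r : ℝ, 0 ≤ r → ∫ s in (0:ℝ)..r, ‖p s‖ ^ 2 ≤ C) := by
  have hpc : Continuous p := continuous_iff_continuousAt.2 fun r => (hp r).continuousAt
  have henergy := krein_norm_sq_sub_norm_sq hp hq hp0 hq0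
  constructor
  · rintro ⟨M, hM⟩
    exact ⟨M ^ 2 / (2 * l.im), fun r hr =>
      integral_norm_sq_le_of_frequently_norm_le (by positivity) hpc henergy hM hr⟩
  · rintro ⟨C, hC⟩
    exact ⟨_, frequently_norm_le_of_integral_norm_sq_le (by positivity) hpc henergy hC⟩

/-- For the Krein system with `Im λ > 0`: `liminf |p*(r,λ)| < ∞` (i.e. `|p*|`
is frequently bounded) iff `∫₀^∞ |p(s,λ)|² ds < ∞` (i.e. the partial integrals
are bounded). -/
theorem krein_liminf_iff_square_integrable
    (a p q : ℝ → ℂ) (l : ℂ)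
    (ha : Continuous a)
    (hl : 0 < l.im)
    (hp : ∀ r, HasDerivAt p (Complex.I * l * p r - (starRingEnd ℂ) (a r) * q r) r)
    (hq : ∀ r, HasDerivAt q (-(a r) * p r) r)
    (hp0 : p 0 = 1) (hq0 : q 0 = 1) :
    (∃ M : ℝ, ∃ᶠ r in atTop, ‖q r‖ ≤ M) ↔
      (∃ C : ℝ, ∀ r : ℝ, 0 ≤ r → ∫ s in (0:ℝ)..r, ‖p s‖ ^ 2 ≤ C) :=
  krein_liminf_iff_square_integrable_general a p q l hl hp hq hp0 hq0
end

section
/- Let φₙ be the orthonormal polynomials on the unit circle generated by the Szegő recursion φ_{n+1}(z) = (1−|aₙ|²)^{-1/2}(zφₙ(z) − conj(aₙ)φₙ*(z)), φ*_{n+1}(z) = (1−|aₙ|²)^{-1/2}(φₙ*(z) − aₙ z φₙ(z)), φ₀ = φ₀* = 1, with |aₙ| < 1 for all n. Then for every z with |z| < 1 and every n ≥ 0, |φₙ*(z)| > |z|·|φₙ(z)|; in particular φₙ*(z) ≠ 0 in the open unit disk. -/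
open Complex

lemma szego_key_normSq (a u v : ℂ) :
    Complex.normSq (v - a * u) - Complex.normSq (u - (starRingEnd ℂ) a * v) =
      (1 - Complex.normSq a) * (Complex.normSq v - Complex.normSq u) := by
  simp [Complex.normSq_apply, Complex.sub_re, Complex.sub_im, Complex.mul_re,
    Complex.mul_im, Complex.conj_re, Complex.conj_im]
  ring

lemma szego_key_abs {a u v : ℂ} (ha : ‖a‖ < 1)
    (huv : ‖u‖ < ‖v‖) :
    ‖u - (starRingEnd ℂ) a * v‖ < ‖v - a * u‖ := by
  have hn : Complex.normSq (u - (starRingEnd ℂ) a * v) <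
      Complex.normSq (v - a * u) := by
    have h1 : Complex.normSq a < 1 := by
      rw [← Complex.sq_norm]; nlinarith [norm_nonneg a]
    have h2 : Complex.normSq u < Complex.normSq v := by
      rw [← Complex.sq_norm, ← Complex.sq_norm]
      exact pow_lt_pow_left₀ huv (norm_nonneg u) (by norm_num)
    nlinarith [szego_key_normSq a u v]
  have := Real.sqrt_lt_sqrt (Complex.normSq_nonneg _) hn
  simpa [Complex.norm_def] using this

/-- For the Szegő recursion with `|aₙ| < 1` and `|z| < 1`:
`|φₙ*(z)| > |z|·|φₙ(z)|` for every `n`, and in particular `φₙ*(z) ≠ 0`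
in the open unit disk. -/
theorem szego_pstar_nonzero
    (a : ℕ → ℂ) (ha : ∀ n, ‖a n‖ < 1)
    (φ φs : ℕ → ℂ → ℂ)
    (h0 : ∀ z, φ 0 z = 1) (h0s : ∀ z, φs 0 z = 1)
    (hrec : ∀ n z, φ (n + 1) z =
      ((Real.sqrt (1 - ‖a n‖ ^ 2) : ℝ) : ℂ)⁻¹ *
        (z * φ n z - (starRingEnd ℂ) (a n) * φs n z))
    (hrecs : ∀ n z, φs (n + 1) z =
      ((Real.sqrt (1 - ‖a n‖ ^ 2) : ℝ) : ℂ)⁻¹ *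
        (φs n z - a n * z * φ n z)) :
    ∀ z : ℂ, ‖z‖ < 1 → ∀ n : ℕ,
      ‖z‖ * ‖φ n z‖ < ‖φs n z‖ ∧
      φs n z ≠ 0 := by
  intro z hz n
  induction n with
  | zero =>
    constructor
    · simpa [h0, h0s] using hz
    · simp [h0s]
  | succ n ih =>
    obtain ⟨ihlt, _⟩ := ih
    have hu : ‖z * φ n z‖ < ‖φs n z‖ := by
      simpa [map_mul] using ihlt
    have hkey := szego_key_abs (ha n) hu
    have hc : 0 < Real.sqrt (1 - ‖a n‖ ^ 2) := by
      apply Real.sqrt_pos.mpr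
      nlinarith [ha n, norm_nonneg (a n)]
    have hcabs : ‖(((Real.sqrt (1 - ‖a n‖ ^ 2) : ℝ) : ℂ)⁻¹)‖
        = (Real.sqrt (1 - ‖a n‖ ^ 2))⁻¹ := by
      rw [norm_inv, Complex.norm_real, Real.norm_eq_abs, abs_of_pos hc]
    have hlt : ‖z‖ * ‖φ (n + 1) z‖ < ‖φs (n + 1) z‖ := by
      rw [hrec, hrecs, norm_mul, norm_mul, hcabs]
      have hinv : 0 < (Real.sqrt (1 - ‖a n‖ ^ 2))⁻¹ := by positivity
      have h1 : ‖z‖ * ‖z * φ n z - (starRingEnd ℂ) (a n) * φs n z‖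
          < ‖φs n z - a n * (z * φ n z)‖ := by
        calc ‖z‖ * ‖z * φ n z - (starRingEnd ℂ) (a n) * φs n z‖
            ≤ ‖z * φ n z - (starRingEnd ℂ) (a n) * φs n z‖ := by
              nlinarith [norm_nonneg (z * φ n z - (starRingEnd ℂ) (a n) * φs n z),
                norm_nonneg z]
          _ < _ := hkey
      have : a n * z * φ n z = a n * (z * φ n z) := by ring
      rw [this]
      calc ‖z‖ * ((Real.sqrt (1 - ‖a n‖ ^ 2))⁻¹ *
            ‖z * φ n z - (starRingEnd ℂ) (a n) * φs n z‖)
          = (Real.sqrt (1 - ‖a n‖ ^ 2))⁻¹ *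
            (‖z‖ * ‖z * φ n z - (starRingEnd ℂ) (a n) * φs n z‖) := by ring
        _ < _ := by exact (mul_lt_mul_iff_right₀ hinv).mpr h1
    refine ⟨hlt, ?_⟩
    intro h
    rw [h] at hlt
    simp at hlt
    nlinarith [norm_nonneg z, norm_nonneg (φ (n + 1) z)]
end
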